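/- arXiv:2402.12209 — 3 statements merged into one kernel-verified Lean document; each statement's English description precedes it below -/
import Mathlib

section
/- Let n ≥ 2 and Q ∈ SU_n. Then there exists X ∈ su_n with exp(X) = Q such that ‖X‖_φ² ≤ ‖Y‖_φ² for every Y ∈ su_n with exp(Y) = Q; that is, the infimum m(Q) := inf{ ‖X‖_φ² : X ∈ su_n, exp(X) = Q } is attained, and in particular the set Θ(Q) := { X ∈ su_n : exp(X) = Q and ‖X‖_φ² = m(Q) } is nonempty. -/
noncomputable section

open scoped Real Matrix
open Matrix

/-- The special unitary group `SU_n` as a set of matrices: `Q Qᴴ = 1` and `det Q = 1`. -/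
def SpecialUnitary (n : ℕ) : Set (Matrix (Fin n) (Fin n) ℂ) :=
  {Q | Q * Qᴴ = 1 ∧ Q.det = 1}

/-- The Lie algebra `su_n`: skew-hermitian traceless matrices. -/
def suSet (n : ℕ) : Set (Matrix (Fin n) (Fin n) ℂ) :=
  {X | Xᴴ = -X ∧ Matrix.trace X = 0}

/-- The squared Frobenius norm `‖X‖_φ² = trace (X Xᴴ)` (a real number). -/
def frobSq {n : ℕ} (X : Matrix (Fin n) (Fin n) ℂ) : ℝ :=
  (Matrix.trace (X * Xᴴ)).re

/-- `m(Q) = inf { ‖X‖_φ² : X ∈ su_n, exp X = Q }`. -/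
def mQ {n : ℕ} (Q : Matrix (Fin n) (Fin n) ℂ) : ℝ :=
  sInf {r : ℝ | ∃ X ∈ suSet n, NormedSpace.exp X = Q ∧ frobSq X = r}

/-- `Θ(Q)`: the set of minimizing `su_n`-logarithms of `Q`. -/
def ThetaQ {n : ℕ} (Q : Matrix (Fin n) (Fin n) ℂ) : Set (Matrix (Fin n) (Fin n) ℂ) :=
  {X | X ∈ suSet n ∧ NormedSpace.exp X = Q ∧ frobSq X = mQ Q}

/-- `su_n`-plog(Q): generalized principal `su_n`-logarithms of `Q`, i.e. `su_n`-logarithms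
all of whose eigenvalues (roots of the characteristic polynomial) have imaginary part
in `[-π, π]`. -/
def plog {n : ℕ} (Q : Matrix (Fin n) (Fin n) ℂ) : Set (Matrix (Fin n) (Fin n) ℂ) :=
  {X | X ∈ suSet n ∧ NormedSpace.exp X = Q ∧
    ∀ lam ∈ X.charpoly.roots, -π ≤ lam.im ∧ lam.im ≤ π}


/-!
A unitary `Q` is `exp (i H)` for the hermitian `H = arg Q` of the continuous functional calculus.
Diagonalising `H = U diag θ U⁻¹`, the condition `det Q = 1` says `∑ θ ∈ 2πℤ`, and subtracting that
multiple of `2π` from a single `θ_j` leaves `exp (i H)` unchanged and makes `H` traceless, so `Q`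
has a logarithm in `su_n`. The logarithms of `Q` form a closed set on which the continuous,
coercive function `‖·‖_φ²` attains its minimum.
-/

lemma exists_sum_eq_zero_exp_mul_I_eq {ι : Type*} [Fintype ι] [DecidableEq ι] (θ : ι → ℝ)
    (h : Complex.exp ((∑ j, θ j : ℝ) * Complex.I) = 1) :
    ∃ θ' : ι → ℝ, ∑ j, θ' j = 0 ∧
      ∀ j, Complex.exp (θ' j * Complex.I) = Complex.exp (θ j * Complex.I) := by
  obtain ⟨k, hk⟩ := Complex.exp_eq_one_iff.mp h
  have hsum : ∑ j, θ j = 2 * π * k := by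
    apply Complex.ofReal_injective
    apply mul_right_cancel₀ Complex.I_ne_zero
    rw [hk]
    push_cast
    ring
  cases isEmpty_or_nonempty ι with
  | inl _ => exact ⟨θ, by simp, fun _ => rfl⟩
  | inr hne =>
    obtain ⟨j₀⟩ := hne
    refine ⟨θ - Pi.single j₀ (2 * π * k), by simp [Finset.sum_sub_distrib, hsum], fun j => ?_⟩
    rw [Pi.sub_apply, Complex.ofReal_sub, sub_mul, Complex.exp_sub]
    rcases eq_or_ne j j₀ with rfl | hj
    · have h2πk : ((2 * π * k : ℝ) : ℂ) * Complex.I = k * (2 * π * Complex.I) := by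
        push_cast
        ring
      rw [Pi.single_eq_same, h2πk, Complex.exp_int_mul_two_pi_mul_I, div_one]
    · simp [Pi.single_eq_of_ne hj]

open scoped Matrix.Norms.Operator in
lemma continuous_matrix_exp {ι : Type*} [Fintype ι] [DecidableEq ι] :
    Continuous (NormedSpace.exp : Matrix ι ι ℂ → Matrix ι ι ℂ) :=
  NormedSpace.exp_continuous

section UnitaryLog

open scoped Matrix.Norms.L2Operator

variable {ι : Type*} [Fintype ι] [DecidableEq ι]

lemma exp_unitary_conj_diagonal {U : Matrix ι ι ℂ} (hU : U ∈ unitaryGroup ι ℂ) (v : ι → ℂ) :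
    NormedSpace.exp (U * diagonal v * star U) =
      U * diagonal (fun j => Complex.exp (v j)) * star U := by
  have hinv : U⁻¹ = star U := inv_eq_left_inv (Unitary.star_mul_self_of_mem hU)
  rw [← hinv, exp_conj U _ ((isUnit_iff_isUnit_det U).mpr (UnitaryGroup.det_isUnit ⟨U, hU⟩)),
    exp_diagonal]
  simp [Pi.exp_def, Complex.exp_eq_exp_ℂ]

lemma exp_I_smul_unitary_conj_diagonal {U : Matrix ι ι ℂ} (hU : U ∈ unitaryGroup ι ℂ)
    (θ : ι → ℝ) :
    NormedSpace.exp (Complex.I • (U * diagonal (fun j => (θ j : ℂ)) * star U)) =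
      U * diagonal (fun j => Complex.exp (θ j * Complex.I)) * star U := by
  rw [← exp_unitary_conj_diagonal hU, ← smul_mul_assoc, ← mul_smul_comm, ← diagonal_smul]
  congr 4 with j
  exact mul_comm _ _

lemma exists_isHermitian_exp_I_smul_eq {Q : Matrix ι ι ℂ} (hQ : Q ∈ unitary (Matrix ι ι ℂ)) :
    ∃ H : Matrix ι ι ℂ, H.IsHermitian ∧ NormedSpace.exp (Complex.I • H) = Q := by
  have hQn : IsStarNormal Q :=
    ⟨(Unitary.star_mul_self_of_mem hQ).trans (Unitary.mul_star_self_of_mem hQ).symm⟩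
  have hcont (f : ℂ → ℂ) : ContinuousOn f (spectrum ℂ Q) := Q.finite_spectrum.continuousOn f
  refine ⟨cfc (fun z : ℂ => (z.arg : ℂ)) Q, ?_, ?_⟩
  · show IsSelfAdjoint _
    rw [IsSelfAdjoint, ← cfc_star]
    exact cfc_congr fun z _ => Complex.conj_ofReal _
  · rw [← cfc_const_mul _ _ Q (hcont _), ← CFC.complex_exp_eq_normedSpace_exp,
      ← cfc_comp' _ _ Q Complex.continuous_exp.continuousOn (hcont _)]
    conv_rhs => rw [← cfc_id' ℂ Q]
    refine cfc_congr fun z hz => ?_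
    have hz' := Complex.norm_mul_exp_arg_mul_I z
    rw [spectrum.norm_eq_one_of_unitary hQ hz, Complex.ofReal_one, one_mul] at hz'
    rwa [mul_comm]

lemma exists_isHermitian_trace_eq_zero_exp_I_smul_eq {Q : Matrix ι ι ℂ}
    (hQ : Q ∈ unitary (Matrix ι ι ℂ)) (hdet : Q.det = 1) :
    ∃ H : Matrix ι ι ℂ, H.IsHermitian ∧ H.trace = 0 ∧ NormedSpace.exp (Complex.I • H) = Q := by
  obtain ⟨H, hH, rfl⟩ := exists_isHermitian_exp_I_smul_eq hQ
  set U := (hH.eigenvectorUnitary : Matrix ι ι ℂ)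
  have hU : U ∈ unitaryGroup ι ℂ := hH.eigenvectorUnitary.2
  have hHU : H = U * diagonal (fun j => (hH.eigenvalues j : ℂ)) * star U := hH.spectral_theorem
  have hUinv : U⁻¹ = star U := inv_eq_left_inv (Unitary.star_mul_self_of_mem hU)
  have hUunit : IsUnit U := (isUnit_iff_isUnit_det U).mpr (UnitaryGroup.det_isUnit ⟨U, hU⟩)
  rw [hHU, exp_I_smul_unitary_conj_diagonal hU, ← hUinv, det_conj hUunit, det_diagonal,
    ← Complex.exp_sum, ← Finset.sum_mul] at hdet
  obtain ⟨θ, hθsum, hθ⟩ := exists_sum_eq_zero_exp_mul_I_eq _ (by exact_mod_cast hdet)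
  refine ⟨U * diagonal (fun j => (θ j : ℂ)) * star U, ?_, ?_, ?_⟩
  · exact isHermitian_mul_mul_conjTranspose U
      (isHermitian_diagonal_of_self_adjoint _ (funext fun j => Complex.conj_ofReal _))
  · rw [← hUinv, trace_conj hUunit, trace_diagonal]
    exact_mod_cast hθsum
  · rw [hHU, exp_I_smul_unitary_conj_diagonal hU, exp_I_smul_unitary_conj_diagonal hU]
    simp_rw [hθ]

end UnitaryLog

lemma exists_mem_suSet_exp_eq {n : ℕ} {Q : Matrix (Fin n) (Fin n) ℂ}
    (hQ : Q ∈ SpecialUnitary n) : ∃ X ∈ suSet n, NormedSpace.exp X = Q := by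
  obtain ⟨hQQ, hdet⟩ := hQ
  obtain ⟨H, hH, htr, hexp⟩ :=
    exists_isHermitian_trace_eq_zero_exp_I_smul_eq ⟨mul_eq_one_comm.mp hQQ, hQQ⟩ hdet
  refine ⟨Complex.I • H, ⟨?_, by rw [trace_smul, htr, smul_zero]⟩, hexp⟩
  rw [conjTranspose_smul, hH.eq, Complex.star_def, Complex.conj_I, neg_smul]

lemma isClosed_setOf_mem_suSet_exp_eq {n : ℕ} (Q : Matrix (Fin n) (Fin n) ℂ) :
    IsClosed {X | X ∈ suSet n ∧ NormedSpace.exp X = Q} :=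
  ((isClosed_eq continuous_id.matrix_conjTranspose continuous_neg).inter
    (isClosed_eq continuous_id.matrix_trace continuous_const)).inter
    (isClosed_eq continuous_matrix_exp continuous_const)

section Frobenius

-- Like the operator norms used above, this norm induces the product topology definitionally, so
-- the topological statements below concern the standard topology on matrices.
attribute [local instance] Matrix.frobeniusNormedAddCommGroup Matrix.frobeniusNormedSpace

lemma frobSq_eq_norm_sq {n : ℕ} (X : Matrix (Fin n) (Fin n) ℂ) : frobSq X = ‖X‖ ^ 2 := by
  change _ = ‖WithLp.toLp 2 fun i => WithLp.toLp 2 (X i)‖ ^ 2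
  simp only [PiLp.norm_sq_eq_of_L2, frobSq, trace, diag_apply, mul_apply, conjTranspose_apply,
    Complex.re_sum, RCLike.star_def, Complex.mul_conj, Complex.ofReal_re,
    Complex.normSq_eq_norm_sq]

lemma continuous_frobSq {n : ℕ} : Continuous (frobSq (n := n)) := by
  simp_rw [funext frobSq_eq_norm_sq]
  fun_prop

lemma tendsto_frobSq_cocompact_atTop {n : ℕ} :
    Filter.Tendsto (frobSq (n := n)) (Filter.cocompact _) Filter.atTop := by
  simp_rw [funext frobSq_eq_norm_sq]
  exact (Filter.tendsto_pow_atTop two_ne_zero).comp tendsto_norm_cocompact_atTop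

end Frobenius

theorem stmt_2_general (n : ℕ) (Q : Matrix (Fin n) (Fin n) ℂ)
    (hQ : Q ∈ SpecialUnitary n) :
    (∃ X ∈ suSet n, NormedSpace.exp X = Q ∧ frobSq X = mQ Q ∧
      ∀ Y ∈ suSet n, NormedSpace.exp Y = Q → frobSq X ≤ frobSq Y)
    ∧ (ThetaQ Q).Nonempty := by
  obtain ⟨X₀, hX₀⟩ := exists_mem_suSet_exp_eq hQ
  obtain ⟨X, ⟨hXsu, hXexp⟩, hXmin⟩ := continuous_frobSq.continuousOn.exists_isMinOn'
    (isClosed_setOf_mem_suSet_exp_eq Q) hX₀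
    ((tendsto_frobSq_cocompact_atTop.eventually_ge_atTop _).filter_mono inf_le_left)
  have hmin : ∀ Y ∈ suSet n, NormedSpace.exp Y = Q → frobSq X ≤ frobSq Y :=
    fun Y hY hYQ => hXmin ⟨hY, hYQ⟩
  have hleast : IsLeast {r | ∃ Y ∈ suSet n, NormedSpace.exp Y = Q ∧ frobSq Y = r} (frobSq X) :=
    ⟨⟨X, hXsu, hXexp, rfl⟩, by rintro _ ⟨Y, hY, hYQ, rfl⟩; exact hmin Y hY hYQ⟩
  have hmQ : frobSq X = mQ Q := hleast.csInf_eq.symm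
  exact ⟨⟨X, hXsu, hXexp, hmQ, hmin⟩, X, hXsu, hXexp, hmQ⟩

/-- the infimum `m(Q)` is attained; in particular `Θ(Q) ≠ ∅`. -/
theorem stmt_2 (n : ℕ) (hn : 2 ≤ n) (Q : Matrix (Fin n) (Fin n) ℂ)
    (hQ : Q ∈ SpecialUnitary n) :
    (∃ X ∈ suSet n, NormedSpace.exp X = Q ∧ frobSq X = mQ Q ∧
      ∀ Y ∈ suSet n, NormedSpace.exp Y = Q → frobSq X ≤ frobSq Y)
    ∧ (ThetaQ Q).Nonempty :=
  stmt_2_general n Q hQ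
end
end

section
/- Let n ≥ 2 and let Q ∈ SU_n have eigenvalues μ_1, …, μ_n counted with multiplicity, and set ζ(Q) := (1/(2π))·Σ_{j=1}^n arg(μ_j) ∈ ℤ. Then m(Q) = min{ Σ_{j=1}^n (arg(μ_j) + 2k_jπ)² : (k_1, …, k_n) ∈ ℤⁿ with Σ_{j=1}^n k_j = −ζ(Q) }. -/
noncomputable section

open scoped Real Matrix
open Matrix

/-!
Every `X ∈ su_n` is `U diag(iθ) U⋆` with `U` unitary and `θ` real with `Σ θ_j = 0`, and then
`exp X = U diag(e^{iθ}) U⋆` and `‖X‖_φ² = Σ θ_j²`. Matching the `e^{iθ_j}` with the eigenvalues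
`μ_j` forces `θ_j = arg μ_j + 2 k_j π`, and the trace condition becomes `Σ k_j = -ζ`. Conversely,
diagonalizing `Q` unitarily realizes every such choice of `k`. The minimum is attained because
`k ↦ Σ (arg μ_j + 2 k_j π)²` tends to infinity on `ℤⁿ`.
-/

open Complex Finset Filter

theorem Fintype.exists_equiv_comp_eq_of_map_univ_eq {ι κ α : Type*} [Fintype ι] [Fintype κ]
    {f : ι → α} {g : κ → α} (h : univ.val.map f = univ.val.map g) :
    ∃ e : ι ≃ κ, ∀ i, g (e i) = f i := by
  classical
  have hcard : ∀ c, Fintype.card {i // f i = c} = Fintype.card {j // g j = c} := fun c => by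
    have := congrArg (Multiset.count c) h
    simp only [Multiset.count_map] at this
    simpa [Fintype.card_subtype, Finset.card_def, Finset.filter_val, eq_comm] using this
  exact ⟨Equiv.ofFiberEquiv fun c => Fintype.equivOfCardEq (hcard c), Equiv.ofFiberEquiv_map _⟩

theorem LinearMap.IsSymmetric.exists_orthonormalBasis_apply_eq_smul_of_commute
    {𝕜 E ι : Type*} [RCLike 𝕜] [NormedAddCommGroup E] [InnerProductSpace 𝕜 E]
    [FiniteDimensional 𝕜 E] [Fintype ι] (hn : Module.finrank 𝕜 E = Fintype.card ι)
    {A B : E →ₗ[𝕜] E} (hA : A.IsSymmetric) (hB : B.IsSymmetric) (hAB : Commute A B) :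
    ∃ (b : OrthonormalBasis ι 𝕜 E) (α β : ι → 𝕜),
      ∀ j, A (b j) = α j • b j ∧ B (b j) = β j • b j := by
  classical
  let V : 𝕜 × 𝕜 → Submodule 𝕜 E := fun i =>
    Module.End.eigenspace A i.2 ⊓ Module.End.eigenspace B i.1
  have hV₀ : DirectSum.IsInternal V := hA.directSum_isInternal_of_commute hB hAB
  have hV : DirectSum.IsInternal fun i : {i // V i ≠ ⊥} => V i :=
    DirectSum.isInternal_ne_bot_iff.mpr hV₀
  have hV' := (hA.orthogonalFamily_eigenspace_inf_eigenspace hB).comp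
    (Subtype.val_injective (p := fun i => V i ≠ ⊥))
  let _ := hV₀.submodule_iSupIndep.fintypeNeBotOfFiniteDimensional
  let e := (Fintype.equivFin ι).symm
  let c j := (hV.subordinateOrthonormalBasisIndex hn (e.symm j) hV').1
  refine ⟨(hV.subordinateOrthonormalBasis hn hV').reindex e, fun j => (c j).2,
    fun j => (c j).1, fun j => ?_⟩
  have hb := hV.subordinateOrthonormalBasis_subordinate hn (e.symm j) hV'
  rw [OrthonormalBasis.reindex_apply]
  exact ⟨Module.End.mem_eigenspace_iff.mp (Submodule.mem_inf.mp hb).1,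
    Module.End.mem_eigenspace_iff.mp (Submodule.mem_inf.mp hb).2⟩

theorem Matrix.exists_unitary_conj_diagonal_of_isStarNormal {ι : Type*} [Fintype ι]
    [DecidableEq ι] (Q : Matrix ι ι ℂ) [IsStarNormal Q] :
    ∃ U ∈ unitaryGroup ι ℂ, ∃ d : ι → ℂ, Q = U * diagonal d * star U := by
  -- Diagonalize the commuting Hermitian matrices `Q + Q⋆` and `I (Q⋆ - Q)` simultaneously.
  have hc : Commute (star Q) Q := star_comm_self
  have hA : (toEuclideanLin (Q + star Q)).IsSymmetric := by
    refine isSymmetric_toEuclideanLin_iff.mpr ?_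
    rw [IsHermitian, ← star_eq_conjTranspose, star_add, star_star, add_comm]
  have hB : (toEuclideanLin (I • (star Q - Q))).IsSymmetric := by
    refine isSymmetric_toEuclideanLin_iff.mpr ?_
    rw [IsHermitian, ← star_eq_conjTranspose, star_smul, star_sub, star_star, Complex.star_def,
      conj_I, neg_smul, ← smul_neg, neg_sub]
  have hAB : Commute (Q + star Q) (I • (star Q - Q)) :=
    ((hc.symm.add_left (Commute.refl _)).sub_right ((Commute.refl Q).add_left hc)).smul_right I
  obtain ⟨b, α, β, hb⟩ := hA.exists_orthonormalBasis_apply_eq_smul_of_commute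
    finrank_euclideanSpace hB (hAB.map (toLpLinAlgEquiv 2))
  have hQ : (2 : ℂ) • Q = (Q + star Q) + I • (I • (star Q - Q)) := by
    rw [smul_smul, I_mul_I, neg_one_smul, neg_sub, two_smul]; abel
  have hQb : ∀ j, Q *ᵥ b j = ((α j + I * β j) / 2) • b j := fun j => by
    have hA' := congrArg WithLp.ofLp (hb j).1
    have hB' := congrArg WithLp.ofLp (hb j).2
    simp only [ofLp_toLpLin, toLin'_apply, WithLp.ofLp_smul] at hA' hB'
    refine smul_right_injective _ (two_ne_zero (α := ℂ)) ?_
    dsimp only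
    rw [← smul_mulVec, hQ, add_mulVec, smul_mulVec, hA', hB', smul_smul, ← add_smul, smul_smul]
    congr 1; ring
  let U := (EuclideanSpace.basisFun ι ℂ).toBasis.toMatrix b
  have hU : U ∈ unitaryGroup ι ℂ :=
    (EuclideanSpace.basisFun ι ℂ).toMatrix_orthonormalBasis_mem_unitary b
  refine ⟨U, hU, fun j => (α j + I * β j) / 2, ?_⟩
  have hQU : Q * U = U * diagonal (fun j => (α j + I * β j) / 2) := by
    ext i j
    have h := congrFun (hQb j) i
    simp only [mulVec, dotProduct, Pi.smul_apply, smul_eq_mul] at h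
    simpa [U, mul_apply, Module.Basis.toMatrix_apply, diagonal_apply, mul_comm] using h
  rw [← hQU, mul_assoc, mem_unitaryGroup_iff.mp hU, mul_one]

open scoped Matrix.Norms.L2Operator in
theorem Matrix.norm_eq_one_of_mem_roots_charpoly {ι : Type*} [Fintype ι] [DecidableEq ι]
    {Q : Matrix ι ι ℂ} (hQ : Q ∈ unitaryGroup ι ℂ) {z : ℂ} (hz : z ∈ Q.charpoly.roots) :
    ‖z‖ = 1 := by
  simpa using spectrum.subset_circle_of_unitary (𝕜 := ℂ) hQ
    (mem_spectrum_of_isRoot_charpoly (Polynomial.isRoot_of_mem_roots hz))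

theorem Matrix.charpoly_roots_unitary_conj_diagonal {ι R : Type*} [Fintype ι] [DecidableEq ι]
    [Field R] [StarRing R] {U : Matrix ι ι R} (hU : U ∈ unitaryGroup ι R) (d : ι → R) :
    (U * diagonal d * star U).charpoly.roots = univ.val.map d := by
  rw [charpoly_mul_comm, ← mul_assoc, Unitary.star_mul_self_of_mem hU, one_mul, charpoly_diagonal,
    Polynomial.roots_prod _ _ (prod_ne_zero_iff.mpr fun i _ => Polynomial.X_sub_C_ne_zero (d i))]
  simp

theorem Complex.exp_ofReal_mul_I_eq_iff {z : ℂ} (hz : ‖z‖ = 1) {θ : ℝ} :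
    exp (θ * I) = z ↔ ∃ m : ℤ, θ = z.arg + 2 * m * π := by
  have hz' : exp (z.arg * I) = z := by simpa [hz] using norm_mul_exp_arg_mul_I z
  conv_lhs => rw [← hz', exp_eq_exp_iff_exists_int]
  refine exists_congr fun m => ?_
  rw [show (z.arg : ℂ) * I + m * (2 * π * I) = ((z.arg + 2 * m * π : ℝ) : ℂ) * I by push_cast; ring,
    mul_left_inj' I_ne_zero, ofReal_inj]

theorem sum_add_two_mul_pi_eq_zero_iff {ι : Type*} [Fintype ι] {a : ι → ℝ} {ζ : ℤ}
    (hζ : ∑ j, a j = 2 * π * ζ) (m : ι → ℤ) :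
    ∑ j, (a j + 2 * m j * π) = 0 ↔ ∑ j, m j = -ζ := by
  have h : ∑ j, (a j + 2 * m j * π) = 2 * π * ((ζ + ∑ j, m j : ℤ) : ℝ) := by
    rw [sum_add_distrib, hζ, ← sum_mul, ← mul_sum]; push_cast; ring
  rw [h, mul_eq_zero, Int.cast_eq_zero]
  simp [Real.pi_ne_zero]
  omega

theorem exists_sum_eq_neg {ι : Type*} [Fintype ι] {a : ι → ℝ} {ζ : ℤ}
    (hζ : ∑ j, a j = 2 * π * ζ) : ∃ k : ι → ℤ, ∑ j, k j = -ζ := by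
  classical
  rcases isEmpty_or_nonempty ι with hι | ⟨⟨i⟩⟩
  · refine ⟨0, ?_⟩
    simp [Real.pi_ne_zero] at hζ
    simp [hζ]
  · exact ⟨Pi.single i (-ζ), by simp⟩

theorem finite_setOf_sq_add_mul_le (x b : ℝ) {c : ℝ} (hc : 0 < c) :
    {m : ℤ | (x + c * m) ^ 2 ≤ b}.Finite := by
  refine (Set.finite_Icc ⌈(-√b - x) / c⌉ ⌊(√b - x) / c⌋).subset fun m hm => ?_
  obtain ⟨hlo, hhi⟩ := abs_le.mp (Real.abs_le_sqrt hm)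
  exact ⟨Int.ceil_le.mpr (by rw [div_le_iff₀ hc]; linarith),
    Int.le_floor.mpr (by rw [le_div_iff₀ hc]; linarith)⟩

theorem tendsto_sum_sq_add_two_mul_pi {ι : Type*} [Fintype ι] (a : ι → ℝ) :
    Tendsto (fun k : ι → ℤ => ∑ j, (a j + 2 * k j * π) ^ 2) cofinite atTop := by
  refine tendsto_atTop.mpr fun b => eventually_cofinite.mpr ?_
  refine (Set.Finite.pi' fun j => finite_setOf_sq_add_mul_le (a j) b
    (by positivity : (0:ℝ) < 2 * π)).subset fun k hk j => ?_
  simp only [Set.mem_ofPred_eq, not_le] at hk ⊢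
  calc (a j + 2 * π * k j) ^ 2 = (a j + 2 * k j * π) ^ 2 := by ring
    _ ≤ ∑ i, (a i + 2 * k i * π) ^ 2 :=
      single_le_sum (f := fun i => (a i + 2 * k i * π) ^ 2) (fun i _ => sq_nonneg _) (mem_univ j)
    _ ≤ b := hk.le

theorem exists_isLeast_sum_sq_add_two_mul_pi {ι : Type*} [Fintype ι] (a : ι → ℝ)
    {p : (ι → ℤ) → Prop} (hp : ∃ k, p k) :
    ∃ r, IsLeast {r | ∃ k, p k ∧ r = ∑ j, (a j + 2 * k j * π) ^ 2} r := by
  obtain ⟨k₀, hk₀, hmin⟩ := (tendsto_sum_sq_add_two_mul_pi a).exists_within_forall_le hp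
  exact ⟨_, ⟨k₀, hk₀, rfl⟩, by rintro _ ⟨k, hk, rfl⟩; exact hmin k hk⟩

section skewDiag

variable {n : ℕ}

def skewDiag (U : Matrix (Fin n) (Fin n) ℂ) (θ : Fin n → ℝ) : Matrix (Fin n) (Fin n) ℂ :=
  U * diagonal (fun j => θ j * I) * star U

theorem exists_skewDiag_eq {X : Matrix (Fin n) (Fin n) ℂ} (hX : Xᴴ = -X) :
    ∃ U ∈ unitaryGroup (Fin n) ℂ, ∃ θ : Fin n → ℝ, X = skewDiag U θ := by
  have hH : ((-I) • X).IsHermitian := by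
    rw [IsHermitian, conjTranspose_smul, hX, star_neg, Complex.star_def, conj_I, neg_neg, smul_neg,
      neg_smul]
  refine ⟨hH.eigenvectorUnitary, hH.eigenvectorUnitary.2, hH.eigenvalues, ?_⟩
  have h := congrArg (I • ·) hH.spectral_theorem
  simp only [Unitary.conjStarAlgAut_apply, smul_smul, mul_neg, I_mul_I, neg_neg, one_smul] at h
  refine h.trans ?_
  rw [skewDiag, ← smul_mul_assoc, ← mul_smul_comm, ← diagonal_smul]
  congr; ext j; simp [mul_comm]

variable {U : Matrix (Fin n) (Fin n) ℂ} (hU : U ∈ unitaryGroup (Fin n) ℂ) (θ : Fin n → ℝ)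
include hU

theorem skewDiag_mem_suSet_iff : skewDiag U θ ∈ suSet n ↔ ∑ j, θ j = 0 := by
  have hskew : (skewDiag U θ)ᴴ = -skewDiag U θ := by
    have hD : star (fun j => (θ j : ℂ) * I) = fun j => -((θ j : ℂ) * I) := by
      ext j; simp
    simp only [skewDiag, star_eq_conjTranspose, conjTranspose_mul, conjTranspose_conjTranspose,
      diagonal_conjTranspose, hD, ← diagonal_neg, mul_neg, neg_mul, mul_assoc]
  have htr : trace (skewDiag U θ) = (∑ j, θ j : ℝ) * I := by
    rw [skewDiag, trace_mul_cycle, Unitary.star_mul_self_of_mem hU, one_mul, trace_diagonal,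
      ofReal_sum, sum_mul]
  simp only [suSet, Set.mem_ofPred_eq, hskew, true_and, htr, mul_eq_zero, I_ne_zero, or_false,
    ofReal_eq_zero]

theorem exp_skewDiag :
    NormedSpace.exp (skewDiag U θ) = U * diagonal (fun j => exp (θ j * I)) * star U := by
  simpa [skewDiag, exp_diagonal, Pi.exp_def, ← Complex.exp_eq_exp_ℂ] using
    Matrix.exp_units_conj (Unitary.toUnits ⟨U, hU⟩) (diagonal (fun j => θ j * I))

theorem frobSq_skewDiag : frobSq (skewDiag U θ) = ∑ j, θ j ^ 2 := by
  rw [frobSq, skewDiag, ← star_eq_conjTranspose]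
  simp only [star_mul, star_star, mul_assoc]
  rw [← mul_assoc (star U) U, Unitary.star_mul_self_of_mem hU, one_mul, trace_mul_comm U,
    mul_assoc, mul_assoc, Unitary.star_mul_self_of_mem hU, mul_one, star_eq_conjTranspose,
    diagonal_conjTranspose, diagonal_mul_diagonal, trace_diagonal, re_sum]
  simp [sq]

end skewDiag

section logarithms

variable {n : ℕ} {Q : Matrix (Fin n) (Fin n) ℂ} {μ : Fin n → ℂ} {ζ : ℤ}
  (hμ : Q.charpoly.roots = univ.val.map μ) (hζ : ∑ j, (μ j).arg = 2 * π * ζ)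
include hμ hζ

theorem exists_int_frobSq_eq_of_exp_eq {X : Matrix (Fin n) (Fin n) ℂ} (hX : X ∈ suSet n)
    (hXQ : NormedSpace.exp X = Q) :
    ∃ k : Fin n → ℤ, ∑ j, k j = -ζ ∧ frobSq X = ∑ j, ((μ j).arg + 2 * (k j : ℝ) * π) ^ 2 := by
  obtain ⟨U, hU, θ, rfl⟩ := exists_skewDiag_eq hX.1
  rw [skewDiag_mem_suSet_iff hU] at hX
  rw [exp_skewDiag hU] at hXQ
  have hroots : univ.val.map (fun j => exp (θ j * I)) = univ.val.map μ := by
    rw [← charpoly_roots_unitary_conj_diagonal hU, hXQ, hμ]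
  obtain ⟨τ, hτ⟩ := Fintype.exists_equiv_comp_eq_of_map_univ_eq hroots.symm
  have hθ : ∀ i, ∃ m : ℤ, θ (τ i) = (μ i).arg + 2 * m * π := fun i =>
    (exp_ofReal_mul_I_eq_iff (by rw [← hτ i]; exact norm_exp_ofReal_mul_I _)).mp (hτ i)
  choose k hk using hθ
  refine ⟨k, ?_, ?_⟩
  · rw [← sum_add_two_mul_pi_eq_zero_iff hζ, ← sum_congr rfl fun i _ => hk i, Equiv.sum_comp τ θ]
    exact hX
  · rw [frobSq_skewDiag hU, ← Equiv.sum_comp τ]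
    simp [hk]

theorem exists_mem_suSet_exp_eq_frobSq_eq (hQ : Q ∈ unitaryGroup (Fin n) ℂ) {k : Fin n → ℤ}
    (hk : ∑ j, k j = -ζ) :
    ∃ X ∈ suSet n, NormedSpace.exp X = Q ∧ frobSq X = ∑ j, ((μ j).arg + 2 * (k j : ℝ) * π) ^ 2 := by
  have hμ₁ : ∀ j, ‖μ j‖ = 1 := fun j =>
    norm_eq_one_of_mem_roots_charpoly hQ (hμ ▸ Multiset.mem_map_of_mem μ (mem_univ j))
  have := isStarNormal_of_mem_unitary hQ
  obtain ⟨U, hU, d, rfl⟩ := exists_unitary_conj_diagonal_of_isStarNormal Q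
  rw [charpoly_roots_unitary_conj_diagonal hU] at hμ
  obtain ⟨σ, hσ⟩ := Fintype.exists_equiv_comp_eq_of_map_univ_eq hμ.symm
  let θ j := (μ j).arg + 2 * (k j : ℝ) * π
  refine ⟨skewDiag U fun i => θ (σ.symm i), (skewDiag_mem_suSet_iff hU _).mpr ?_, ?_, ?_⟩
  · rw [Equiv.sum_comp σ.symm θ]
    exact (sum_add_two_mul_pi_eq_zero_iff hζ k).mpr hk
  · rw [exp_skewDiag hU]
    congr
    ext i
    rw [← Equiv.apply_symm_apply σ i, hσ, Equiv.symm_apply_apply]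
    exact (exp_ofReal_mul_I_eq_iff (hμ₁ _)).mpr ⟨k _, rfl⟩
  · rw [frobSq_skewDiag hU]
    exact Equiv.sum_comp σ.symm (fun j => θ j ^ 2)

end logarithms

theorem stmt_4_general (n : ℕ) (Q : Matrix (Fin n) (Fin n) ℂ)
    (hQ : Q ∈ SpecialUnitary n) (μ : Fin n → ℂ)
    (hμ : Q.charpoly.roots = Multiset.map μ Finset.univ.val)
    (ζ : ℤ) (hζ : (∑ j, (μ j).arg) = 2 * π * ζ) :
    IsLeast {r : ℝ | ∃ k : Fin n → ℤ, (∑ j, k j) = -ζ ∧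
      r = ∑ j, ((μ j).arg + 2 * (k j : ℝ) * π) ^ 2} (mQ Q) := by
  have hlogs : {r | ∃ X ∈ suSet n, NormedSpace.exp X = Q ∧ frobSq X = r} =
      {r | ∃ k : Fin n → ℤ, ∑ j, k j = -ζ ∧ r = ∑ j, ((μ j).arg + 2 * (k j : ℝ) * π) ^ 2} := by
    ext r
    constructor
    · rintro ⟨X, hX, hXQ, rfl⟩
      exact exists_int_frobSq_eq_of_exp_eq hμ hζ hX hXQ
    · rintro ⟨k, hk, rfl⟩
      exact exists_mem_suSet_exp_eq_frobSq_eq hμ hζ (mem_unitaryGroup_iff.mpr hQ.1) hk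
  obtain ⟨r, hr⟩ := exists_isLeast_sum_sq_add_two_mul_pi (fun j => (μ j).arg) (exists_sum_eq_neg hζ)
  rwa [mQ, hlogs, hr.csInf_eq]

/-- `m(Q)` is the minimum of `Σ (arg μ_j + 2 k_j π)²` over integer
tuples `k` with `Σ k_j = −ζ(Q)`. -/
theorem stmt_4 (n : ℕ) (hn : 2 ≤ n) (Q : Matrix (Fin n) (Fin n) ℂ)
    (hQ : Q ∈ SpecialUnitary n) (μ : Fin n → ℂ)
    (hμ : Q.charpoly.roots = Multiset.map μ Finset.univ.val)
    (ζ : ℤ) (hζ : (∑ j, (μ j).arg) = 2 * π * ζ) :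
    IsLeast {r : ℝ | ∃ k : Fin n → ℤ, (∑ j, k j) = -ζ ∧
      r = ∑ j, ((μ j).arg + 2 * (k j : ℝ) * π) ^ 2} (mQ Q) :=
  stmt_4_general n Q hQ μ hμ ζ hζ
end
end

section
/- Let n ≥ 2 and let Q ∈ SU_n have eigenvalues μ_1, …, μ_n counted with multiplicity, ordered so that arg(μ_1) ≤ ⋯ ≤ arg(μ_n), and suppose ζ := ζ(Q) = (1/(2π))·Σ_{j=1}^n arg(μ_j) ≥ 1. Then Θ(Q) equals the set of all X ∈ su_n with exp(X) = Q whose multiset of eigenvalues is { arg(μ_1)·i, …, arg(μ_{n−ζ})·i, (arg(μ_{n−ζ+1}) − 2π)·i, …, (arg(μ_n) − 2π)·i }. -/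
/-!
Every `X ∈ su_n` is `U · diag(i a) · Uᴴ` with `U` unitary, `a` real, `∑ a = 0` and
`‖X‖_φ² = ∑ a²`. If `exp X = Q`, the `e^{i a_j}` are the eigenvalues of `Q`, so after a
permutation `a = t - 2πd` with `d` integral and `∑ d = 0`, where `t` are the shifted arguments
(`arg μ_j`, lowered by `2π` for the last `ζ` indices). These lie in a window `[s - 2π, s]`
(`s = arg μ_{n-ζ+1}`) and sum to `0`. Then `∑ (t - 2πd)² - ∑ t² = 4π ∑ d_j (π d_j - c_j)` with
`c_j = t_j + π - s ∈ [-π, π]`, the term linear in `s` cancelling because `∑ d = 0`. Every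
summand is nonnegative and vanishes only if `d_j = 0`, or `d_j = ±1` and `t_j` sits at the
matching end of the window; as `∑ d = 0`, equally many values jump each way, so equality forces
`{a_j} = {t_j}` as multisets.
-/

noncomputable section

open scoped Real Matrix
open Matrix

open Finset Complex

lemma int_mul_pi_mul_sub_nonneg {c : ℝ} (hc : c ∈ Set.Icc (-π) π) (k : ℤ) :
    0 ≤ k * (π * k - c) := by
  obtain ⟨hlo, hhi⟩ := hc
  rcases lt_trichotomy k 0 with hk | rfl | hk
  · have : (k : ℝ) ≤ -1 := by exact_mod_cast Int.le_sub_one_of_lt hk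
    exact mul_nonneg_of_nonpos_of_nonpos (by linarith) (by nlinarith)
  · simp
  · have : (1 : ℝ) ≤ k := by exact_mod_cast hk
    exact mul_nonneg (by linarith) (by nlinarith)

lemma eq_of_int_mul_pi_mul_sub_eq_zero {c : ℝ} (hc : c ∈ Set.Icc (-π) π) {k : ℤ}
    (h : k * (π * k - c) = 0) : k = 0 ∨ (k = 1 ∧ c = π) ∨ (k = -1 ∧ c = -π) := by
  obtain ⟨hlo, hhi⟩ := hc
  rcases mul_eq_zero.1 h with hk | hk
  · exact Or.inl (by exact_mod_cast hk)
  have hkc : c = π * k := by linarith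
  have hk_le : |(k : ℝ)| ≤ 1 := abs_le.2 ⟨by nlinarith [Real.pi_pos], by nlinarith [Real.pi_pos]⟩
  have : k = -1 ∨ k = 0 ∨ k = 1 := by
    have := abs_le.1 (show |k| ≤ 1 by exact_mod_cast hk_le)
    omega
  rcases this with rfl | rfl | rfl <;> simp [hkc]

lemma add_pi_sub_mem_Icc {x s : ℝ} (hx : x ∈ Set.Icc (s - 2 * π) s) :
    x + π - s ∈ Set.Icc (-π) π :=
  ⟨by linarith [hx.1], by linarith [hx.2]⟩

lemma exists_int_of_cexp_mul_I_eq {x y : ℝ} (h : cexp (x * I) = cexp (y * I)) :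
    ∃ k : ℤ, x = y - 2 * π * k := by
  obtain ⟨m, hm⟩ := Complex.exp_eq_exp_iff_exists_int.1 h
  refine ⟨-m, ofReal_injective ?_⟩
  push_cast
  apply mul_right_cancel₀ I_ne_zero
  linear_combination hm

lemma cexp_sub_two_pi_mul_int_mul_I (x : ℝ) (k : ℤ) :
    cexp (((x - 2 * π * k : ℝ) : ℂ) * I) = cexp (x * I) :=
  Complex.exp_eq_exp_iff_exists_int.2 ⟨-k, by push_cast; ring⟩

section Multisets

variable {ι α : Type*} [Fintype ι]

lemma exists_perm_of_map_univ_val_eq {f g : ι → α}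
    (h : Multiset.map f univ.val = Multiset.map g univ.val) :
    ∃ σ : Equiv.Perm ι, ∀ j, f j = g (σ j) := by
  classical
  have hfiber (a : α) : Fintype.card {j // f j = a} = Fintype.card {j // g j = a} := by
    simpa [Multiset.count_map, Fintype.card_subtype, eq_comm, Finset.card, Finset.filter_val] using
      congrArg (Multiset.count a) h
  let e (a : α) := Fintype.equivOfCardEq (hfiber a)
  refine ⟨(Equiv.sigmaFiberEquiv f).symm.trans
    ((Equiv.sigmaCongrRight e).trans (Equiv.sigmaFiberEquiv g)), fun j => ?_⟩
  exact ((e (f j) ⟨j, rfl⟩).2).symm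

lemma map_univ_val_eq_of_swap {f g : ι → α} {x y : α} {d : ι → ℤ} (hd : ∑ j, d j = 0)
    (h : ∀ j, d j = 0 ∧ f j = g j ∨ d j = 1 ∧ f j = x ∧ g j = y ∨ d j = -1 ∧ f j = y ∧ g j = x) :
    Multiset.map f univ.val = Multiset.map g univ.val := by
  set Z := univ.filter fun j => d j = 0
  set P := univ.filter fun j => d j = 1
  set N := univ.filter fun j => d j = -1
  have hZ : ∀ j ∈ Z.val, f j = g j := fun j hj => by
    rcases h j with ⟨-, h1⟩ | ⟨h0, -⟩ | ⟨h0, -⟩ <;> simp_all [Z]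
  have hP : ∀ j ∈ P, f j = x ∧ g j = y := fun j hj => by
    rcases h j with ⟨h0, -⟩ | ⟨-, h1⟩ | ⟨h0, -⟩ <;> simp_all [P]
  have hN : ∀ j ∈ N, f j = y ∧ g j = x := fun j hj => by
    rcases h j with ⟨h0, -⟩ | ⟨h0, -⟩ | ⟨-, h1⟩ <;> simp_all [N]
  have hcard : #P = #N := by
    have : ∑ j, d j = #P - #N := by
      rw [natCast_card_filter, natCast_card_filter, ← sum_sub_distrib]
      refine sum_congr rfl fun j _ => ?_
      rcases h j with ⟨h0, -⟩ | ⟨h0, -⟩ | ⟨h0, -⟩ <;> simp [h0]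
    omega
  have hPN : Disjoint P N := disjoint_filter.2 fun j _ h1 h2 => by omega
  have hZPN : Disjoint Z (P.disjUnion N hPN) := by
    rw [Finset.disjoint_left]
    intro j hjZ hjPN
    simp only [Z, P, N, mem_filter, mem_univ, true_and, mem_disjUnion] at hjZ hjPN
    omega
  have huniv : univ = Z.disjUnion (P.disjUnion N hPN) hZPN := by
    ext j
    rcases h j with ⟨h0, -⟩ | ⟨h0, -⟩ | ⟨h0, -⟩ <;> simp [Z, P, N, h0]
  have hconst (F : ι → α) (S : Finset ι) (z : α) (hF : ∀ j ∈ S, F j = z) :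
      Multiset.map F S.val = Multiset.replicate #S z := by
    rw [Multiset.map_congr rfl hF, Multiset.map_const', card_val]
  rw [huniv]
  simp only [disjUnion_val, Multiset.map_add]
  rw [Multiset.map_congr rfl hZ, hconst f P x fun j hj => (hP j hj).1,
    hconst f N y fun j hj => (hN j hj).1, hconst g P y fun j hj => (hP j hj).2,
    hconst g N x fun j hj => (hN j hj).2, hcard, add_comm (Multiset.replicate _ x)]

end Multisets

section ShiftByMultiplesOfTwoPi

variable {ι : Type*} [Fintype ι] {s : ℝ} {t : ι → ℝ} {d : ι → ℤ}

lemma sum_sq_sub_two_pi_mul (s : ℝ) (hd : ∑ j, d j = 0) :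
    ∑ j, (t j - 2 * π * d j) ^ 2
      = ∑ j, t j ^ 2 + 4 * π * ∑ j, d j * (π * d j - (t j + π - s)) := by
  have hdR : ∑ j, (d j : ℝ) = 0 := by exact_mod_cast hd
  calc ∑ j, (t j - 2 * π * d j) ^ 2
      = ∑ j, (t j ^ 2 + 4 * π * (d j * (π * d j - (t j + π - s))) + 4 * π * (π - s) * d j) :=
        sum_congr rfl fun j _ => by ring
    _ = _ := by rw [sum_add_distrib, sum_add_distrib, ← mul_sum, ← mul_sum, hdR, mul_zero, add_zero]

theorem sum_sq_le_sum_sq_sub_two_pi_mul (ht : ∀ j, t j ∈ Set.Icc (s - 2 * π) s)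
    (hd : ∑ j, d j = 0) : ∑ j, t j ^ 2 ≤ ∑ j, (t j - 2 * π * d j) ^ 2 := by
  rw [sum_sq_sub_two_pi_mul s hd, le_add_iff_nonneg_right]
  exact mul_nonneg (by positivity) <|
    sum_nonneg fun j _ => int_mul_pi_mul_sub_nonneg (add_pi_sub_mem_Icc (ht j)) (d j)

theorem map_sub_two_pi_mul_eq_of_sum_sq_eq (ht : ∀ j, t j ∈ Set.Icc (s - 2 * π) s)
    (hd : ∑ j, d j = 0) (heq : ∑ j, (t j - 2 * π * d j) ^ 2 = ∑ j, t j ^ 2) :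
    Multiset.map (fun j => t j - 2 * π * d j) univ.val = Multiset.map t univ.val := by
  rw [sum_sq_sub_two_pi_mul s hd, add_eq_left, mul_eq_zero, sum_eq_zero_iff_of_nonneg
    fun j _ => int_mul_pi_mul_sub_nonneg (add_pi_sub_mem_Icc (ht j)) (d j)] at heq
  refine map_univ_val_eq_of_swap (x := s - 2 * π) (y := s) hd fun j => ?_
  have hj := heq.resolve_left (by positivity) j (mem_univ j)
  rcases eq_of_int_mul_pi_mul_sub_eq_zero (add_pi_sub_mem_Icc (ht j)) hj with h | ⟨h, h'⟩ | ⟨h, h'⟩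
  · exact Or.inl ⟨h, by simp [h]⟩
  · exact Or.inr (Or.inl ⟨h, by rw [h]; push_cast; linarith, by linarith⟩)
  · exact Or.inr (Or.inr ⟨h, by rw [h]; push_cast; linarith, by linarith⟩)

end ShiftByMultiplesOfTwoPi

lemma exists_perm_int_of_map_cexp_eq {ι : Type*} [Fintype ι] {a t : ι → ℝ}
    (h : Multiset.map (fun j => cexp (a j * I)) univ.val
      = Multiset.map (fun j => cexp (t j * I)) univ.val) :
    ∃ σ : Equiv.Perm ι, ∃ d : ι → ℤ, ∀ j, a j = t (σ j) - 2 * π * d j := by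
  obtain ⟨σ, hσ⟩ := exists_perm_of_map_univ_val_eq h
  choose d hd using fun j => exists_int_of_cexp_mul_I_eq (hσ j)
  exact ⟨σ, d, hd⟩

section UnitaryConj

variable {ι : Type*} [DecidableEq ι]

lemma conjTranspose_diagonal_ofReal_mul_I (r : ι → ℝ) :
    (diagonal fun j => (r j : ℂ) * I)ᴴ = -diagonal fun j => (r j : ℂ) * I := by
  rw [diagonal_conjTranspose, diagonal_neg]
  congr 1; ext j; simp

variable [Fintype ι] {U : Matrix ι ι ℂ}

lemma charpoly_unitary_conj (hU : U ∈ unitaryGroup ι ℂ) (A : Matrix ι ι ℂ) :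
    (U * A * Uᴴ).charpoly = A.charpoly := by
  rw [mul_assoc, charpoly_mul_comm, mul_assoc, ← star_eq_conjTranspose,
    mem_unitaryGroup_iff'.1 hU, mul_one]

lemma exp_unitary_conj (hU : U ∈ unitaryGroup ι ℂ) (A : Matrix ι ι ℂ) :
    NormedSpace.exp (U * A * Uᴴ) = U * NormedSpace.exp A * Uᴴ := by
  have hinv : U⁻¹ = Uᴴ := inv_eq_right_inv (mem_unitaryGroup_iff.1 hU)
  rw [← hinv, Matrix.exp_conj _ _ (.of_mul_eq_one _ (mem_unitaryGroup_iff.1 hU))]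

lemma trace_unitary_conj (hU : U ∈ unitaryGroup ι ℂ) (A : Matrix ι ι ℂ) :
    trace (U * A * Uᴴ) = trace A := by
  rw [trace_mul_cycle, ← star_eq_conjTranspose, mem_unitaryGroup_iff'.1 hU, one_mul]

lemma roots_charpoly_diagonal (v : ι → ℂ) :
    (diagonal v).charpoly.roots = Multiset.map v univ.val := by
  rw [charpoly_diagonal, Polynomial.roots_prod]
  · simp
  · simp [prod_ne_zero_iff, Polynomial.X_sub_C_ne_zero]

lemma exp_diagonal_eq_diagonal_cexp (v : ι → ℂ) :
    NormedSpace.exp (diagonal v) = diagonal fun j => cexp (v j) := by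
  rw [Matrix.exp_diagonal, Pi.exp_def]
  simp only [← Complex.exp_eq_exp_ℂ]

lemma exists_unitary_conj_diagonal_of_conjTranspose_eq_neg {X : Matrix ι ι ℂ} (hX : Xᴴ = -X) :
    ∃ U ∈ unitaryGroup ι ℂ, ∃ a : ι → ℝ, X = U * diagonal (fun j => (a j : ℂ) * I) * Uᴴ := by
  have hH : (-I • X).IsHermitian := by
    rw [IsHermitian, conjTranspose_smul, hX, star_neg, Complex.star_def, conj_I, smul_neg, neg_smul,
      neg_neg]
  refine ⟨hH.eigenvectorUnitary, hH.eigenvectorUnitary.2, hH.eigenvalues, ?_⟩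
  have hXH : X = I • (-I • X) := by rw [smul_smul]; simp
  conv_lhs => rw [hXH, hH.spectral_theorem, Unitary.conjStarAlgAut_apply]
  rw [← smul_mul_assoc, ← mul_smul_comm, ← diagonal_smul, star_eq_conjTranspose]
  congr 3
  ext j
  simp [mul_comm]

lemma norm_eq_one_of_mem_roots_charpoly_exp {X : Matrix ι ι ℂ} (hX : Xᴴ = -X) {z : ℂ}
    (hz : z ∈ (NormedSpace.exp X).charpoly.roots) : ‖z‖ = 1 := by
  obtain ⟨U, hU, a, rfl⟩ := exists_unitary_conj_diagonal_of_conjTranspose_eq_neg hX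
  rw [exp_unitary_conj hU, charpoly_unitary_conj hU, exp_diagonal_eq_diagonal_cexp,
    roots_charpoly_diagonal] at hz
  obtain ⟨j, -, rfl⟩ := Multiset.mem_map.1 hz
  exact norm_exp_ofReal_mul_I (a j)

end UnitaryConj

section SpecialUnitaryLieAlgebra

variable {n : ℕ} {U X : Matrix (Fin n) (Fin n) ℂ}

lemma frobSq_unitary_conj (hU : U ∈ unitaryGroup (Fin n) ℂ) (A : Matrix (Fin n) (Fin n) ℂ) :
    frobSq (U * A * Uᴴ) = frobSq A := by
  have hUU : Uᴴ * U = 1 := mem_unitaryGroup_iff'.1 hU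
  have : U * A * Uᴴ * (U * A * Uᴴ)ᴴ = U * (A * Aᴴ) * Uᴴ := by
    simp only [conjTranspose_mul, conjTranspose_conjTranspose, mul_assoc, ← mul_assoc Uᴴ U, hUU,
      one_mul]
  rw [frobSq, this, trace_unitary_conj hU, frobSq]

lemma frobSq_diagonal_ofReal_mul_I (r : Fin n → ℝ) :
    frobSq (diagonal fun j => (r j : ℂ) * I) = ∑ j, r j ^ 2 := by
  rw [frobSq, conjTranspose_diagonal_ofReal_mul_I, mul_neg, diagonal_mul_diagonal, trace_neg,
    trace_diagonal]
  simp [sq]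

lemma unitary_conj_diagonal_mem_suSet_iff (hU : U ∈ unitaryGroup (Fin n) ℂ) (r : Fin n → ℝ) :
    U * diagonal (fun j => (r j : ℂ) * I) * Uᴴ ∈ suSet n ↔ ∑ j, r j = 0 := by
  have hskew : (U * diagonal (fun j => (r j : ℂ) * I) * Uᴴ)ᴴ
      = -(U * diagonal (fun j => (r j : ℂ) * I) * Uᴴ) := by
    rw [conjTranspose_mul, conjTranspose_mul, conjTranspose_conjTranspose,
      conjTranspose_diagonal_ofReal_mul_I, neg_mul, mul_neg, mul_assoc]
  rw [suSet, Set.mem_ofPred_eq, trace_unitary_conj hU, trace_diagonal, ← sum_mul, ← ofReal_sum]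
  simp only [hskew, true_and, mul_eq_zero, I_ne_zero, or_false, ofReal_eq_zero]

theorem exists_unitary_conj_of_mem_suSet {t : Fin n → ℝ} (htsum : ∑ j, t j = 0)
    (hX : X ∈ suSet n)
    (hroots : (NormedSpace.exp X).charpoly.roots = Multiset.map (fun j => cexp (t j * I)) univ.val) :
    ∃ U ∈ unitaryGroup (Fin n) ℂ, ∃ σ : Equiv.Perm (Fin n), ∃ d : Fin n → ℤ, ∑ j, d j = 0 ∧
      X = U * diagonal (fun j => ((t (σ j) - 2 * π * d j : ℝ) : ℂ) * I) * Uᴴ := by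
  obtain ⟨U, hU, a, rfl⟩ := exists_unitary_conj_diagonal_of_conjTranspose_eq_neg hX.1
  rw [exp_unitary_conj hU, charpoly_unitary_conj hU, exp_diagonal_eq_diagonal_cexp,
    roots_charpoly_diagonal] at hroots
  obtain ⟨σ, d, had⟩ := exists_perm_int_of_map_cexp_eq hroots
  have hasum : ∑ j, a j = 0 := (unitary_conj_diagonal_mem_suSet_iff hU a).1 hX
  refine ⟨U, hU, σ, d, ?_, by simp only [had]⟩
  simp only [had, sum_sub_distrib, Equiv.sum_comp σ t, htsum, ← mul_sum, zero_sub, neg_eq_zero,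
    mul_eq_zero, Real.pi_ne_zero, two_ne_zero, false_or] at hasum
  exact_mod_cast hasum

end SpecialUnitaryLieAlgebra

section MinimalLogarithms

variable {n : ℕ} {X : Matrix (Fin n) (Fin n) ℂ} {s : ℝ} {t : Fin n → ℝ}

theorem sum_sq_le_frobSq (ht : ∀ j, t j ∈ Set.Icc (s - 2 * π) s) (htsum : ∑ j, t j = 0)
    (hX : X ∈ suSet n)
    (hroots : (NormedSpace.exp X).charpoly.roots = Multiset.map (fun j => cexp (t j * I)) univ.val) :
    ∑ j, t j ^ 2 ≤ frobSq X := by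
  obtain ⟨U, hU, σ, d, hd, rfl⟩ := exists_unitary_conj_of_mem_suSet htsum hX hroots
  rw [frobSq_unitary_conj hU, frobSq_diagonal_ofReal_mul_I, ← Equiv.sum_comp σ (fun j => t j ^ 2)]
  exact sum_sq_le_sum_sq_sub_two_pi_mul (fun j => ht (σ j)) hd

theorem exists_mem_suSet_exp_eq_frobSq_eq_s11 (htsum : ∑ j, t j = 0) (hX : X ∈ suSet n)
    (hroots : (NormedSpace.exp X).charpoly.roots = Multiset.map (fun j => cexp (t j * I)) univ.val) :
    ∃ Y ∈ suSet n, NormedSpace.exp Y = NormedSpace.exp X ∧ frobSq Y = ∑ j, t j ^ 2 := by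
  obtain ⟨U, hU, σ, d, -, rfl⟩ := exists_unitary_conj_of_mem_suSet htsum hX hroots
  refine ⟨U * diagonal (fun j => (t (σ j) : ℂ) * I) * Uᴴ,
    (unitary_conj_diagonal_mem_suSet_iff hU _).2 (by rw [Equiv.sum_comp σ t, htsum]), ?_, ?_⟩
  · simp only [exp_unitary_conj hU, exp_diagonal_eq_diagonal_cexp, cexp_sub_two_pi_mul_int_mul_I]
  · rw [frobSq_unitary_conj hU, frobSq_diagonal_ofReal_mul_I, Equiv.sum_comp σ (fun j => t j ^ 2)]

theorem mQ_exp_eq (ht : ∀ j, t j ∈ Set.Icc (s - 2 * π) s) (htsum : ∑ j, t j = 0)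
    (hX : X ∈ suSet n)
    (hroots : (NormedSpace.exp X).charpoly.roots = Multiset.map (fun j => cexp (t j * I)) univ.val) :
    mQ (NormedSpace.exp X) = ∑ j, t j ^ 2 := by
  refine IsLeast.csInf_eq ⟨?_, ?_⟩
  · exact exists_mem_suSet_exp_eq_frobSq_eq_s11 htsum hX hroots
  · rintro r ⟨Y, hY, hexp, rfl⟩
    exact sum_sq_le_frobSq ht htsum hY (hexp ▸ hroots)

theorem frobSq_eq_sum_sq_iff (ht : ∀ j, t j ∈ Set.Icc (s - 2 * π) s) (htsum : ∑ j, t j = 0)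
    (hX : X ∈ suSet n)
    (hroots : (NormedSpace.exp X).charpoly.roots = Multiset.map (fun j => cexp (t j * I)) univ.val) :
    frobSq X = ∑ j, t j ^ 2 ↔
      X.charpoly.roots = Multiset.map (fun j => (t j : ℂ) * I) univ.val := by
  obtain ⟨U, hU, σ, d, hd, rfl⟩ := exists_unitary_conj_of_mem_suSet htsum hX hroots
  have hσ : Multiset.map (fun j => t (σ j)) univ.val = Multiset.map t univ.val :=
    (Multiset.map_map t σ univ.val).symm.trans (congrArg _ (Multiset.map_univ_val_equiv σ))
  have hmap (g : Fin n → ℝ) : Multiset.map (fun j => (g j : ℂ) * I) univ.val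
      = (Multiset.map g univ.val).map fun x : ℝ => (x : ℂ) * I :=
    (Multiset.map_map (fun x : ℝ => (x : ℂ) * I) g univ.val).symm
  have hinj : Function.Injective fun x : ℝ => (x : ℂ) * I := fun x y h =>
    ofReal_injective (mul_right_cancel₀ I_ne_zero h)
  rw [frobSq_unitary_conj hU, frobSq_diagonal_ofReal_mul_I, charpoly_unitary_conj hU,
    roots_charpoly_diagonal, hmap, hmap, (Multiset.map_injective hinj).eq_iff, ← hσ,
    ← Equiv.sum_comp σ (fun j => t j ^ 2)]
  refine ⟨map_sub_two_pi_mul_eq_of_sum_sq_eq (fun j => ht (σ j)) hd, fun h => ?_⟩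
  have := congrArg (fun m => (m.map (· ^ 2)).sum) h
  simp only [Multiset.map_map, Function.comp_def] at this
  simpa only [sum_eq_multiset_sum] using this

end MinimalLogarithms

section ShiftedArguments

variable {n : ℕ} {μ : Fin n → ℂ} {ζ : ℕ}

def shiftedArg (μ : Fin n → ℂ) (ζ : ℕ) (j : Fin n) : ℝ :=
  if (j : ℕ) < n - ζ then (μ j).arg else (μ j).arg - 2 * π

lemma le_of_sum_arg_eq (hζ : ∑ j, (μ j).arg = 2 * π * ζ) : ζ ≤ n := by
  have h : ∑ j, (μ j).arg ≤ ∑ _j : Fin n, π := sum_le_sum fun j _ => arg_le_pi (μ j)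
  rw [sum_const, card_univ, Fintype.card_fin, nsmul_eq_mul, hζ] at h
  have : (ζ : ℝ) ≤ n := by nlinarith [Real.pi_pos]
  exact_mod_cast this

lemma shiftedArg_mem_Icc (hmono : Monotone fun j => (μ j).arg) (p : Fin n) (hp : (p : ℕ) = n - ζ)
    (j : Fin n) : shiftedArg μ ζ j ∈ Set.Icc ((μ p).arg - 2 * π) (μ p).arg := by
  have hlo := neg_pi_lt_arg (μ j)
  have hhi := arg_le_pi (μ j)
  have hlo' := neg_pi_lt_arg (μ p)
  have hhi' := arg_le_pi (μ p)
  unfold shiftedArg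
  split_ifs with hj
  · have : (μ j).arg ≤ (μ p).arg := hmono (Fin.le_def.2 (by omega))
    exact ⟨by linarith, this⟩
  · have : (μ p).arg ≤ (μ j).arg := hmono (Fin.le_def.2 (by omega))
    exact ⟨by linarith, by linarith⟩

lemma sum_shiftedArg (hζn : ζ ≤ n) (hζ : ∑ j, (μ j).arg = 2 * π * ζ) :
    ∑ j, shiftedArg μ ζ j = 0 := by
  have hcount : ∑ j : Fin n, (if (j : ℕ) < n - ζ then (1 : ℝ) else 0) = (n - ζ : ℕ) := by
    rw [sum_boole, Fin.card_filter_val_lt, min_eq_right (Nat.sub_le n ζ)]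
  calc ∑ j, shiftedArg μ ζ j
      = ∑ j, ((μ j).arg - 2 * π + 2 * π * if (j : ℕ) < n - ζ then 1 else 0) :=
        sum_congr rfl fun j _ => by unfold shiftedArg; split_ifs <;> ring
    _ = 0 := by
      rw [sum_add_distrib, sum_sub_distrib, sum_const, card_univ, Fintype.card_fin, nsmul_eq_mul,
        ← mul_sum, hcount, hζ, Nat.cast_sub hζn]
      ring

lemma cexp_shiftedArg_mul_I {j : Fin n} (hμ : ‖μ j‖ = 1) : cexp (shiftedArg μ ζ j * I) = μ j := by
  have h := norm_mul_exp_arg_mul_I (μ j)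
  rw [hμ, ofReal_one, one_mul] at h
  unfold shiftedArg
  split_ifs
  · exact h
  · rw [ofReal_sub, sub_mul, Complex.exp_sub, h]
    push_cast
    rw [exp_two_pi_mul_I, div_one]

end ShiftedArguments

theorem stmt_11_general (n : ℕ) (Q : Matrix (Fin n) (Fin n) ℂ)
    (μ : Fin n → ℂ)
    (hμ : Q.charpoly.roots = Multiset.map μ Finset.univ.val)
    (hmono : Monotone fun j => (μ j).arg)
    (ζ : ℕ) (hζ1 : 1 ≤ ζ) (hζ : (∑ j, (μ j).arg) = 2 * π * ζ) :
    ThetaQ Q = {X | X ∈ suSet n ∧ NormedSpace.exp X = Q ∧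
      X.charpoly.roots =
        Multiset.map (fun (j : Fin n) =>
          (((if (j : ℕ) < n - ζ then (μ j).arg else (μ j).arg - 2 * π) : ℝ) : ℂ)
            * Complex.I) Finset.univ.val} := by
  have hζn : ζ ≤ n := le_of_sum_arg_eq hζ
  have ht := shiftedArg_mem_Icc hmono ⟨n - ζ, by omega⟩ rfl
  have htsum := sum_shiftedArg hζn hζ
  ext X
  refine and_congr_right fun hX => and_congr_right fun hexp => ?_
  subst hexp
  have hroots : (NormedSpace.exp X).charpoly.roots
      = Multiset.map (fun j => cexp (shiftedArg μ ζ j * I)) univ.val := by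
    rw [hμ]
    refine Multiset.map_congr rfl fun j _ => (cexp_shiftedArg_mul_I ?_).symm
    exact norm_eq_one_of_mem_roots_charpoly_exp hX.1 (hμ ▸ Multiset.mem_map_of_mem μ (mem_univ j))
  rw [mQ_exp_eq ht htsum hX hroots]
  exact frobSq_eq_sum_sq_iff ht htsum hX hroots

/-- if the eigenvalues are ordered by increasing principal argument and
`ζ := ζ(Q) ≥ 1`, then `Θ(Q)` is the set of `su_n`-logarithms of `Q` whose multiset of
eigenvalues is `{arg(μ_1)·i, …, arg(μ_{n−ζ})·i, (arg(μ_{n−ζ+1})−2π)·i, …, (arg(μ_n)−2π)·i}`. -/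
theorem stmt_11 (n : ℕ) (hn : 2 ≤ n) (Q : Matrix (Fin n) (Fin n) ℂ)
    (hQ : Q ∈ SpecialUnitary n) (μ : Fin n → ℂ)
    (hμ : Q.charpoly.roots = Multiset.map μ Finset.univ.val)
    (hmono : Monotone fun j => (μ j).arg)
    (ζ : ℕ) (hζ1 : 1 ≤ ζ) (hζ : (∑ j, (μ j).arg) = 2 * π * ζ) :
    ThetaQ Q = {X | X ∈ suSet n ∧ NormedSpace.exp X = Q ∧
      X.charpoly.roots =
        Multiset.map (fun (j : Fin n) =>
          (((if (j : ℕ) < n - ζ then (μ j).arg else (μ j).arg - 2 * π) : ℝ) : ℂ)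
            * Complex.I) Finset.univ.val} :=
  stmt_11_general n Q μ hμ hmono ζ hζ1 hζ
end
end
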